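/- The Lobachevsky function Λ(x) = -∫₀ˣ log|2 sin u| du satisfies Λ''(x) = -cot(x) for x ∈ (0, π), and the function F(α, β, γ) = Λ(α) + Λ(β) + Λ(γ) restricted to the simplex {α + β + γ = π, α, β, γ > 0} is strictly concave; equivalently, the Hessian of F restricted to the tangent space {(a,b,c) : a + b + c = 0} is negative definite at each interior point. -/

import Mathlib

/-!
Away from the zeros of `sin`, the fundamental theorem of calculus gives `Λ' = -log |2 sin|`, hence
`Λ'' = -cot`. On the tangent space `a + b + c = 0`, eliminating `c` turns `∑ a² cot α` into a binary
quadratic form whose leading coefficient `cot α + cot γ = sin β / (sin α sin γ)` is positive and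
whose determinant is `cot α cot β + cot β cot γ + cot γ cot α = 1` when `α + β + γ = π`;
so the form `∑ a² (-cot α)` is negative definite there.
-/

open MeasureTheory Real Set Filter Topology

noncomputable def lobachevsky (x : ℝ) : ℝ :=
  -∫ u in (0 : ℝ)..x, log |2 * sin u|

lemma intervalIntegrable_log_abs_two_mul_sin (a b : ℝ) :
    IntervalIntegrable (fun u => log |2 * sin u|) volume a b := by
  have hmero : MeromorphicOn (fun u => 2 * sin u) (uIcc a b) :=
    (analyticOnNhd_const.mul analyticOnNhd_sin).meromorphicOn
  simpa only [log_abs, Function.comp_def] using hmero.intervalIntegrable_log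

lemma hasDerivAt_lobachevsky {x : ℝ} (hx : sin x ≠ 0) :
    HasDerivAt lobachevsky (-log |2 * sin x|) x := by
  have hcont : ContinuousAt (fun u => log |2 * sin u|) x :=
    ((continuous_const.mul continuous_sin).abs.continuousAt).log (by simpa using hx)
  have hmeas : Measurable (fun u => log |2 * sin u|) := by fun_prop
  exact (intervalIntegral.integral_hasDerivAt_right (intervalIntegrable_log_abs_two_mul_sin 0 x)
    hmeas.stronglyMeasurable.stronglyMeasurableAtFilter hcont).neg

lemma deriv_deriv_lobachevsky {x : ℝ} (hx : sin x ≠ 0) :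
    deriv (deriv lobachevsky) x = -cot x := by
  have hderiv : deriv lobachevsky =ᶠ[𝓝 x] fun y => -log (2 * sin y) := by
    filter_upwards [(isOpen_ne_fun continuous_sin continuous_const).mem_nhds hx] with y hy
    rw [(hasDerivAt_lobachevsky hy).deriv, log_abs]
  have hlog : HasDerivAt (fun y => -log (2 * sin y)) (-(2 * cos x / (2 * sin x))) x :=
    (((hasDerivAt_sin x).const_mul 2).log (by simpa using hx)).neg
  rw [hderiv.deriv_eq, hlog.deriv, cot_eq_cos_div_sin]
  field_simp

lemma cot_add_cot {α γ : ℝ} (hα : sin α ≠ 0) (hγ : sin γ ≠ 0) :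
    cot α + cot γ = sin (α + γ) / (sin α * sin γ) := by
  rw [cot_eq_cos_div_sin, cot_eq_cos_div_sin, sin_add]
  field_simp
  ring

lemma cot_mul_cot_add_cot_mul_cot_add_cot_mul_cot {α β γ : ℝ} (hsum : α + β + γ = π)
    (hα : sin α ≠ 0) (hβ : sin β ≠ 0) (hγ : sin γ ≠ 0) :
    cot α * cot β + cot β * cot γ + cot γ * cot α = 1 := by
  have hγ_eq : γ = π - (α + β) := by linarith
  have hsinγ : sin γ = sin α * cos β + cos α * sin β := by
    rw [hγ_eq, sin_pi_sub, sin_add]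
  have hcosγ : cos γ = sin α * sin β - cos α * cos β := by
    rw [hγ_eq, cos_pi_sub, cos_add]
    ring
  simp only [cot_eq_cos_div_sin]
  field_simp
  rw [hsinγ, hcosγ]
  ring

lemma sq_mul_add_sq_mul_add_sq_mul_pos {x y z a b c : ℝ} (hxz : 0 < x + z)
    (hdet : 0 < x * y + y * z + z * x) (habc : a + b + c = 0) (hne : (a, b, c) ≠ 0) :
    0 < a ^ 2 * x + b ^ 2 * y + c ^ 2 * z := by
  have hc : c = -a - b := by linarith
  have hab : a ≠ 0 ∨ b ≠ 0 := by
    by_contra! h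
    exact hne (by simp [h.1, h.2, hc])
  have hsq : (x + z) * (a ^ 2 * x + b ^ 2 * y + c ^ 2 * z)
      = ((x + z) * a + z * b) ^ 2 + b ^ 2 * (x * y + y * z + z * x) := by
    rw [hc]
    ring
  have hrhs : 0 < ((x + z) * a + z * b) ^ 2 + b ^ 2 * (x * y + y * z + z * x) := by
    rcases eq_or_ne b 0 with rfl | hb
    · have ha : a ≠ 0 := by simpa using hab
      have hsq_pos : 0 < ((x + z) * a) ^ 2 := by positivity
      simpa using hsq_pos
    · positivity
  exact pos_of_mul_pos_right (hsq ▸ hrhs) hxz.le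

lemma sq_mul_cot_add_sq_mul_cot_add_sq_mul_cot_pos {α β γ : ℝ} (hα : α ∈ Ioo 0 π)
    (hβ : β ∈ Ioo 0 π) (hγ : γ ∈ Ioo 0 π) (hsum : α + β + γ = π) {a b c : ℝ}
    (habc : a + b + c = 0) (hne : (a, b, c) ≠ 0) :
    0 < a ^ 2 * cot α + b ^ 2 * cot β + c ^ 2 * cot γ := by
  have hsα := sin_pos_of_mem_Ioo hα
  have hsβ := sin_pos_of_mem_Ioo hβ
  have hsγ := sin_pos_of_mem_Ioo hγ
  have hcot : 0 < cot α + cot γ := by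
    rw [cot_add_cot hsα.ne' hsγ.ne', show α + γ = π - β by linarith, sin_pi_sub]
    positivity
  refine sq_mul_add_sq_mul_add_sq_mul_pos hcot ?_ habc hne
  rw [cot_mul_cot_add_cot_mul_cot_add_cot_mul_cot hsum hsα.ne' hsβ.ne' hsγ.ne']
  exact one_pos

theorem lobachevsky_second_deriv_and_concavity
    (Λ : ℝ → ℝ)
    (hΛ : ∀ x : ℝ, Λ x = -∫ u in (0:ℝ)..x, Real.log |2 * Real.sin u|) :
    (∀ x ∈ Set.Ioo (0:ℝ) Real.pi,
        deriv (deriv Λ) x = -(Real.cos x / Real.sin x)) ∧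
    (∀ α β γ : ℝ, α ∈ Set.Ioo 0 Real.pi → β ∈ Set.Ioo 0 Real.pi →
      γ ∈ Set.Ioo 0 Real.pi → α + β + γ = Real.pi →
      ∀ a b c : ℝ, a + b + c = 0 → (a, b, c) ≠ 0 →
        a ^ 2 * (-(Real.cos α / Real.sin α)) + b ^ 2 * (-(Real.cos β / Real.sin β)) +
          c ^ 2 * (-(Real.cos γ / Real.sin γ)) < 0) := by
  obtain rfl : Λ = lobachevsky := funext hΛ
  simp only [← cot_eq_cos_div_sin]
  refine ⟨fun x hx => deriv_deriv_lobachevsky (sin_pos_of_mem_Ioo hx).ne', ?_⟩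
  intro α β γ hα hβ hγ hsum a b c habc hne
  linarith [sq_mul_cot_add_sq_mul_cot_add_sq_mul_cot_pos hα hβ hγ hsum habc hne]
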